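/- arXiv:1404.4301 — 2 statements merged into one kernel-verified Lean document; each statement's English description precedes it below -/
import Mathlib

section
/- Let V be a closed monoidal category and S a tensor-closed V-module. For each K, X, Y the morphism ϕ̲_{K,X,Y} : 𝒮(K⊗X,Y) → [K,𝒮(X,Y)] characterized by π ∘ φ = V(L,ϕ̲) ∘ φ ∘ a* (for all L) is inverse to the composite [K,𝒮(X,Y)] → 𝒮(K⊗X, 𝒮(X,Y)⊗X) → 𝒮(K⊗X,Y) given by (−⊗X)_{K,𝒮(X,Y)} followed by 𝒮(1, ε_Y). -/
/-!
Both maps are tested on generalized elements `w : L ⟶ -`. Precomposing the composite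
`[K, 𝒮(X,Y)] ⟶ 𝒮(K⊗X, Y)` with `w` computes the chain of bijections
`V(L, [K, 𝒮(X,Y)]) ≃ V(L⊗K, 𝒮(X,Y)) ≃ S((L⊗K)⊗X, Y) ≃ S(L⊗(K⊗X), Y) ≃ V(L, 𝒮(K⊗X, Y))`
given by `π`, `φ`, `a` and `φ`, while the defining property of `ϕ̲` says that precomposing `ϕ̲`
computes the inverse chain. By Yoneda the two morphisms are then mutually inverse.
-/

open CategoryTheory Category MonoidalCategory

/-- A tensor-closed left `V`-module (Hovey): a left `V`-module `S` (action
`act : V ⥤ S ⥤ S` with associativity `a`, unit `l` and coherence) together with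
a hom bifunctor `𝒮(-,-) : Sᵒᵖ × S ⥤ V` (given by `hom`, `mapL`, `mapR`) and
natural bijections `φ_{K,X,Y} : S(K⊗X, Y) ≅ V(K, 𝒮(X,Y))`. -/
structure TensorClosedVModule (V : Type*) [Category V] [MonoidalCategory V]
    (S : Type*) [Category S] where
  act : V ⥤ S ⥤ S
  assoc : ∀ (K L : V) (X : S),
    (act.obj (K ⊗ L)).obj X ≅ (act.obj K).obj ((act.obj L).obj X)
  assoc_natural : ∀ {K K' L L' : V} {X X' : S} (u : K ⟶ K') (v : L ⟶ L') (w : X ⟶ X'),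
    (act.map (u ⊗ₘ v)).app X ≫ (act.obj (K' ⊗ L')).map w ≫ (assoc K' L' X').hom
      = (assoc K L X).hom ≫ (act.map u).app ((act.obj L).obj X)
          ≫ (act.obj K').map ((act.map v).app X ≫ (act.obj L').map w)
  unit : ∀ X : S, (act.obj (𝟙_ V)).obj X ≅ X
  unit_natural : ∀ {X X' : S} (w : X ⟶ X'),
    (act.obj (𝟙_ V)).map w ≫ (unit X').hom = (unit X).hom ≫ w
  pentagon : ∀ (K L M : V) (X : S),
    (assoc (K ⊗ L) M X).hom ≫ (assoc K L ((act.obj M).obj X)).hom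
      = (act.map (α_ K L M).hom).app X ≫ (assoc K (L ⊗ M) X).hom
          ≫ (act.obj K).map (assoc L M X).hom
  triangle : ∀ (K : V) (X : S),
    (assoc K (𝟙_ V) X).hom ≫ (act.obj K).map (unit X).hom
      = (act.map (ρ_ K).hom).app X
  hom : S → S → V
  mapL : ∀ {X Y : S}, (X ⟶ Y) → ∀ Z : S, hom Y Z ⟶ hom X Z
  mapR : ∀ (X : S) {Y Z : S}, (Y ⟶ Z) → (hom X Y ⟶ hom X Z)
  mapL_id : ∀ X Z : S, mapL (𝟙 X) Z = 𝟙 (hom X Z)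
  mapR_id : ∀ X Y : S, mapR X (𝟙 Y) = 𝟙 (hom X Y)
  mapL_comp : ∀ {X Y Z : S} (f : X ⟶ Y) (g : Y ⟶ Z) (W : S),
    mapL (f ≫ g) W = mapL g W ≫ mapL f W
  mapR_comp : ∀ (X : S) {Y Z W : S} (g : Y ⟶ Z) (h : Z ⟶ W),
    mapR X (g ≫ h) = mapR X g ≫ mapR X h
  map_comm : ∀ {X Y : S} (f : X ⟶ Y) {Z W : S} (g : Z ⟶ W),
    mapL f Z ≫ mapR X g = mapR Y g ≫ mapL f W
  φ : ∀ (K : V) (X Y : S), ((act.obj K).obj X ⟶ Y) ≃ (K ⟶ hom X Y)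
  φ_natK : ∀ {K' K : V} {X Y : S} (u : K' ⟶ K) (f : (act.obj K).obj X ⟶ Y),
    φ K' X Y ((act.map u).app X ≫ f) = u ≫ φ K X Y f
  φ_natX : ∀ {K : V} {X' X Y : S} (v : X' ⟶ X) (f : (act.obj K).obj X ⟶ Y),
    φ K X' Y ((act.obj K).map v ≫ f) = φ K X Y f ≫ mapL v Y
  φ_natY : ∀ {K : V} {X Y Y' : S} (f : (act.obj K).obj X ⟶ Y) (w : Y ⟶ Y'),
    φ K X Y' (f ≫ w) = φ K X Y f ≫ mapR X w

variable {V : Type*} [Category V] [MonoidalCategory V]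
variable {S : Type*} [Category S]

/-- The counit `ε_Y : 𝒮(X,Y) ⊗ X ⟶ Y` of the adjunction `φ`. -/
noncomputable def TensorClosedVModule.ε (M : TensorClosedVModule V S) (X Y : S) :
    (M.act.obj (M.hom X Y)).obj X ⟶ Y :=
  (M.φ (M.hom X Y) X Y).symm (𝟙 (M.hom X Y))

/-- The enriched composition `b = φ(ε_Z ∘ (1 ⊗ ε_Y) ∘ a) :
𝒮(Y,Z) ⊗ 𝒮(X,Y) ⟶ 𝒮(X,Z)` of a tensor-closed `V`-module. -/
noncomputable def TensorClosedVModule.comp (M : TensorClosedVModule V S)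
    (X Y Z : S) : M.hom Y Z ⊗ M.hom X Y ⟶ M.hom X Z :=
  M.φ (M.hom Y Z ⊗ M.hom X Y) X Z
    ((M.assoc (M.hom Y Z) (M.hom X Y) X).hom
      ≫ (M.act.obj (M.hom Y Z)).map (M.ε X Y) ≫ M.ε Y Z)

/-- `φ_{X,Y} : S(X,Y) → V(I, 𝒮(X,Y))`, given by `φ_{I,X,Y} ∘ (precompose l_X)`. -/
noncomputable def TensorClosedVModule.φ' (M : TensorClosedVModule V S)
    {X Y : S} (f : X ⟶ Y) : 𝟙_ V ⟶ M.hom X Y :=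
  M.φ (𝟙_ V) X Y ((M.unit X).hom ≫ f)

/-- The enriched action `(−⊗X)_{K,L} = φ((ε_L ⊗ 1) ∘ a)`. -/
noncomputable def tensorAction (M : TensorClosedVModule V S)
    (H : V → V ⥤ V) (adj : ∀ Y : V, tensorRight Y ⊣ H Y) (X : S) (K L : V) :
    (H K).obj L ⟶ M.hom ((M.act.obj K).obj X) ((M.act.obj L).obj X) :=
  M.φ ((H K).obj L) ((M.act.obj K).obj X) ((M.act.obj L).obj X)
    ((M.assoc ((H K).obj L) K X).inv ≫ (M.act.map ((adj K).counit.app L)).app X)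

theorem CategoryTheory.comp_eq_id_of_forall_comp_eq {C : Type*} [Category C] {A B : C}
    (e : ∀ L : C, (L ⟶ A) ≃ (L ⟶ B)) {c : A ⟶ B} {u : B ⟶ A}
    (hc : ∀ (L : C) (w : L ⟶ A), w ≫ c = e L w)
    (hu : ∀ (L : C) (v : L ⟶ B), v ≫ u = (e L).symm v) :
    u ≫ c = 𝟙 B ∧ c ≫ u = 𝟙 A := by
  constructor
  · rw [hc, ← (e B).apply_symm_apply (𝟙 B), ← hu, id_comp]
  · rw [hu, ← (e A).symm_apply_apply (𝟙 A), ← hc, id_comp]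

namespace TensorClosedVModule

variable (M : TensorClosedVModule V S)

@[simp]
theorem φ_ε (X Y : S) : M.φ (M.hom X Y) X Y (M.ε X Y) = 𝟙 (M.hom X Y) := by
  simp [ε]

theorem φ_symm_eq_comp_ε {L : V} {X Y : S} (v : L ⟶ M.hom X Y) :
    (M.φ L X Y).symm v = (M.act.map v).app X ≫ M.ε X Y := by
  rw [Equiv.symm_apply_eq, φ_natK, φ_ε, comp_id]

theorem assoc_inv_naturality_left {L L' : V} (v : L ⟶ L') (K : V) (X : S) :
    (M.act.map v).app ((M.act.obj K).obj X) ≫ (M.assoc L' K X).inv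
      = (M.assoc L K X).inv ≫ (M.act.map (v ▷ K)).app X := by
  have h := M.assoc_natural v (𝟙 K) (𝟙 X)
  simp only [tensorHom_id, CategoryTheory.Functor.map_id, id_comp, NatTrans.id_app, comp_id] at h
  rw [Iso.comp_inv_eq, Category.assoc, h, Iso.inv_hom_id_assoc]

variable {H : V → V ⥤ V} (adj : ∀ Y : V, tensorRight Y ⊣ H Y)

noncomputable def curryEquiv (K : V) (X Y : S) (L : V) :
    (L ⟶ (H K).obj (M.hom X Y)) ≃ (L ⟶ M.hom ((M.act.obj K).obj X) Y) :=
  ((adj K).homEquiv L (M.hom X Y)).symm.trans <|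
    (M.φ (L ⊗ K) X Y).symm.trans <| (M.assoc L K X).homFromEquiv.trans <|
      M.φ L ((M.act.obj K).obj X) Y

theorem comp_tensorAction_mapR_ε {K L : V} {X Y : S} (w : L ⟶ (H K).obj (M.hom X Y)) :
    w ≫ tensorAction M H adj X K (M.hom X Y) ≫ M.mapR ((M.act.obj K).obj X) (M.ε X Y)
      = M.curryEquiv adj K X Y L w := by
  simp only [curryEquiv, tensorAction, Equiv.trans_apply, Adjunction.homEquiv_counit,
    Iso.homFromEquiv_apply, φ_symm_eq_comp_ε, ← φ_natY, ← φ_natK]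
  rw [← Category.assoc, ← Category.assoc, assoc_inv_naturality_left, Functor.map_comp,
    NatTrans.comp_app]
  simp

end TensorClosedVModule

/-- Let `V` be a closed monoidal category and `S` a tensor-closed `V`-module.
The morphism `ϕ̲_{K,X,Y} : 𝒮(K⊗X,Y) ⟶ [K, 𝒮(X,Y)]` characterized by
`π ∘ φ = V(L,ϕ̲) ∘ φ ∘ a*` (for all `L`) is inverse to the composite
`[K,𝒮(X,Y)] ⟶ 𝒮(K⊗X, 𝒮(X,Y)⊗X) ⟶ 𝒮(K⊗X,Y)` given by `(−⊗X)_{K,𝒮(X,Y)}`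
followed by `𝒮(1, ε_Y)`. -/
theorem phiBar_inverse (M : TensorClosedVModule V S)
    (H : V → V ⥤ V) (adj : ∀ Y : V, tensorRight Y ⊣ H Y)
    (K : V) (X Y : S)
    (u : M.hom ((M.act.obj K).obj X) Y ⟶ (H K).obj (M.hom X Y))
    (hu : ∀ (L : V) (g : (M.act.obj L).obj ((M.act.obj K).obj X) ⟶ Y),
      (adj K).homEquiv L (M.hom X Y)
          (M.φ (L ⊗ K) X Y ((M.assoc L K X).hom ≫ g))
        = M.φ L ((M.act.obj K).obj X) Y g ≫ u) :
    u ≫ tensorAction M H adj X K (M.hom X Y)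
        ≫ M.mapR ((M.act.obj K).obj X) (M.ε X Y)
      = 𝟙 (M.hom ((M.act.obj K).obj X) Y) ∧
    (tensorAction M H adj X K (M.hom X Y)
        ≫ M.mapR ((M.act.obj K).obj X) (M.ε X Y)) ≫ u
      = 𝟙 ((H K).obj (M.hom X Y)) := by
  refine comp_eq_id_of_forall_comp_eq (M.curryEquiv adj K X Y)
    (fun L w => M.comp_tensorAction_mapR_ε adj w) fun L v => ?_
  obtain ⟨g, rfl⟩ := (M.φ L ((M.act.obj K).obj X) Y).surjective v
  rw [← hu]
  simp [TensorClosedVModule.curryEquiv]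
end

section
/- Let V be a closed symmetric monoidal category and S a closed V-module: a tensor-closed left V-module together with a functor ⋔ : V × S^op → S^op and natural isomorphisms ψ_{K,X,Y} : S(Y, K⋔X) ≅ V(K, 𝒮(Y,X)). Then there exist unique natural isomorphisms a^op_{K,L,X} : K⋔(L⋔X) → (K⊗L)⋔X and l^op_X : X → I⋔X making S^op into a tensor-closed V-module whose V-structure is the opposite of that of S; in particular, a^op is determined by the compatibility S((L⊗K)⊗Y,X) via the braiding c and the adjunctions φ, ψ, and l^op is determined by φ ∘ l_Y^* = ψ ∘ (l^op_X)_* = φ^op. -/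
open CategoryTheory Category MonoidalCategory

variable {V : Type*} [Category V] [MonoidalCategory V]
variable {S : Type*} [Category S]

/-!
Composing `ψ` with `φ⁻¹` gives natural bijections `S(Y, K⋔X) ≃ S(K⊗Y, X)`, so a map into a
cotensor is determined by the transposes of its precompositions (Yoneda). The two
characterising identities say exactly that the transpose of `f ≫ a^op` is
`c ≫ a ≫ (transpose of the transpose of f)` and that of `f ≫ l^op` is `l_Y ≫ f`; this defines
`a^op`, `l^op` and forces their uniqueness. Precomposition with either map is then a composite of
bijections, so both are isomorphisms, and every axiom of `Sᵒᵖ` transposes to a coherence identity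
in `S`: the pentagon to the pentagon of `S` together with the Yang–Baxter equation for `c`, the
triangle to `a ≫ l = λ ⊗ 1` (Kelly's argument) and `c ≫ λ = ρ`.
-/

namespace TensorClosedVModule

variable (M : TensorClosedVModule V S)

lemma assoc_hom_naturality_obj (K L : V) {X X' : S} (w : X ⟶ X') :
    (M.act.obj (K ⊗ L)).map w ≫ (M.assoc K L X').hom
      = (M.assoc K L X).hom ≫ (M.act.obj K).map ((M.act.obj L).map w) := by
  simpa using M.assoc_natural (𝟙 K) (𝟙 L) w

lemma assoc_hom_naturality_left {K K' : V} (u : K ⟶ K') (L : V) (X : S) :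
    (M.act.map (u ▷ L)).app X ≫ (M.assoc K' L X).hom
      = (M.assoc K L X).hom ≫ (M.act.map u).app ((M.act.obj L).obj X) := by
  simpa using M.assoc_natural u (𝟙 L) (𝟙 X)

lemma assoc_hom_naturality_right (K : V) {L L' : V} (v : L ⟶ L') (X : S) :
    (M.act.map (K ◁ v)).app X ≫ (M.assoc K L' X).hom
      = (M.assoc K L X).hom ≫ (M.act.obj K).map ((M.act.map v).app X) := by
  simpa using M.assoc_natural (𝟙 K) v (𝟙 X)

lemma act_unit_map_injective {X X' : S} {f g : X ⟶ X'}
    (h : (M.act.obj (𝟙_ V)).map f = (M.act.obj (𝟙_ V)).map g) : f = g := by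
  rw [← cancel_epi (M.unit X).hom, ← M.unit_natural, h, M.unit_natural]

lemma assoc_hom_comp_unit_hom (K : V) (Y : S) :
    (M.assoc (𝟙_ V) K Y).hom ≫ (M.unit ((M.act.obj K).obj Y)).hom
      = (M.act.map (λ_ K).hom).app Y := by
  apply M.act_unit_map_injective
  rw [← cancel_epi ((M.act.map (α_ (𝟙_ V) (𝟙_ V) K).hom).app Y
    ≫ (M.assoc (𝟙_ V) (𝟙_ V ⊗ K) Y).hom)]
  calc _ = (M.assoc (𝟙_ V ⊗ 𝟙_ V) K Y).hom
        ≫ (M.assoc (𝟙_ V) (𝟙_ V) ((M.act.obj K).obj Y)).hom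
        ≫ (M.act.obj (𝟙_ V)).map (M.unit ((M.act.obj K).obj Y)).hom := by
        simp [reassoc_of% M.pentagon]
    _ = (M.act.map ((ρ_ (𝟙_ V)).hom ▷ K)).app Y ≫ (M.assoc (𝟙_ V) K Y).hom := by
        rw [M.triangle, assoc_hom_naturality_left]
    _ = _ := by
        rw [← MonoidalCategory.triangle]
        simp only [Functor.map_comp, NatTrans.comp_app, Category.assoc,
          assoc_hom_naturality_right]

section Braided

variable [BraidedCategory V]

lemma braiding_assoc_naturality {K K' L L' : V} (u : K ⟶ K') (v : L ⟶ L') (Y : S) :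
    (M.act.map (u ⊗ₘ v)).app Y ≫ (M.act.map (β_ K' L').hom).app Y ≫ (M.assoc L' K' Y).hom
      = (M.act.map (β_ K L).hom).app Y ≫ (M.assoc L K Y).hom
          ≫ (M.act.obj L).map ((M.act.map u).app Y) ≫ (M.act.map v).app ((M.act.obj K').obj Y) := by
  have h := M.assoc_natural v u (𝟙 Y)
  simp only [CategoryTheory.Functor.map_id, Category.id_comp, Category.comp_id] at h
  rw [← NatTrans.comp_app_assoc, ← Functor.map_comp, BraidedCategory.braiding_naturality,
    Functor.map_comp, NatTrans.comp_app_assoc, h, NatTrans.naturality]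

lemma braiding_assoc_naturality_obj (K L : V) {Y Y' : S} (w : Y ⟶ Y') :
    (M.act.obj (K ⊗ L)).map w ≫ (M.act.map (β_ K L).hom).app Y' ≫ (M.assoc L K Y').hom
      = (M.act.map (β_ K L).hom).app Y ≫ (M.assoc L K Y).hom
          ≫ (M.act.obj L).map ((M.act.obj K).map w) := by
  rw [NatTrans.naturality_assoc, assoc_hom_naturality_obj]

lemma braiding_assoc_tensor (K L N : V) (Y : S) :
    (M.act.map (β_ (K ⊗ L) N).hom).app Y ≫ (M.assoc N (K ⊗ L) Y).hom
        ≫ (M.act.obj N).map ((M.act.map (β_ K L).hom).app Y ≫ (M.assoc L K Y).hom)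
      = (M.act.map (α_ K L N).hom).app Y
          ≫ (M.act.map (β_ K (L ⊗ N)).hom).app Y ≫ (M.assoc (L ⊗ N) K Y).hom
          ≫ (M.act.map (β_ L N).hom).app ((M.act.obj K).obj Y)
          ≫ (M.assoc N L ((M.act.obj K).obj Y)).hom := by
  have hV : (β_ (K ⊗ L) N).hom ≫ N ◁ (β_ K L).hom ≫ (α_ N L K).inv
      = (α_ K L N).hom ≫ (β_ K (L ⊗ N)).hom ≫ (β_ L N).hom ▷ K := by
    rw [← cancel_epi (α_ K L N).inv, ← cancel_mono (α_ N L K).hom]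
    simpa using (BraidedCategory.yang_baxter K L N).symm
  have hM : (M.assoc N (L ⊗ K) Y).hom ≫ (M.act.obj N).map (M.assoc L K Y).hom
      = (M.act.map (α_ N L K).inv).app Y ≫ (M.assoc (N ⊗ L) K Y).hom
          ≫ (M.assoc N L ((M.act.obj K).obj Y)).hom := by
    rw [M.pentagon, ← NatTrans.comp_app_assoc, ← Functor.map_comp, Iso.inv_hom_id,
      CategoryTheory.Functor.map_id, NatTrans.id_app, Category.id_comp]
  rw [Functor.map_comp, ← reassoc_of% assoc_hom_naturality_right, hM,
    ← reassoc_of% assoc_hom_naturality_left]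
  simp only [← NatTrans.comp_app_assoc, ← Functor.map_comp, hV]

lemma braiding_assoc_unit (K : V) (Y : S) :
    (M.act.map (β_ K (𝟙_ V)).hom).app Y ≫ (M.assoc (𝟙_ V) K Y).hom
        ≫ (M.unit ((M.act.obj K).obj Y)).hom
      = (M.act.map (ρ_ K).hom).app Y := by
  rw [assoc_hom_comp_unit_hom, ← NatTrans.comp_app, ← Functor.map_comp, braiding_leftUnitor]

end Braided

end TensorClosedVModule

/-- Cotensors `K⋔X = obj K X` for a tensor-closed `V`-module, with the natural bijections
`ψ : S(Y, K⋔X) ≃ V(K, 𝒮(Y,X))`. -/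
structure TensorClosedVModule.Cotensor (M : TensorClosedVModule V S) where
  obj : V → S → S
  mapV : ∀ {K L : V}, (K ⟶ L) → ∀ X : S, obj L X ⟶ obj K X
  mapS : ∀ (K : V) {X X' : S}, (X ⟶ X') → (obj K X ⟶ obj K X')
  ψ : ∀ (K : V) (X Y : S), (Y ⟶ obj K X) ≃ (K ⟶ M.hom Y X)
  ψ_natK : ∀ {K' K : V} {X Y : S} (u : K' ⟶ K) (f : Y ⟶ obj K X),
    ψ K' X Y (f ≫ mapV u X) = u ≫ ψ K X Y f
  ψ_natX : ∀ {K : V} {X X' Y : S} (v : X ⟶ X') (f : Y ⟶ obj K X),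
    ψ K X' Y (f ≫ mapS K v) = ψ K X Y f ≫ M.mapR Y v
  ψ_natY : ∀ {K : V} {X Y' Y : S} (w : Y' ⟶ Y) (f : Y ⟶ obj K X),
    ψ K X Y' (w ≫ f) = ψ K X Y f ≫ M.mapL w X

namespace TensorClosedVModule.Cotensor

variable {M : TensorClosedVModule V S} (C : M.Cotensor)

noncomputable def transpose (K : V) (X Y : S) :
    (Y ⟶ C.obj K X) ≃ ((M.act.obj K).obj Y ⟶ X) :=
  (C.ψ K X Y).trans (M.φ K Y X).symm

lemma φ_transpose {K : V} {X Y : S} (f : Y ⟶ C.obj K X) :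
    M.φ K Y X (C.transpose K X Y f) = C.ψ K X Y f :=
  (M.φ K Y X).apply_symm_apply _

lemma transpose_comp {K : V} {X Y' Y : S} (w : Y' ⟶ Y) (f : Y ⟶ C.obj K X) :
    C.transpose K X Y' (w ≫ f) = (M.act.obj K).map w ≫ C.transpose K X Y f := by
  apply (M.φ K Y' X).injective
  rw [M.φ_natX, φ_transpose, φ_transpose, C.ψ_natY]

lemma transpose_comp_mapV {K' K : V} {X Y : S} (u : K' ⟶ K) (f : Y ⟶ C.obj K X) :
    C.transpose K' X Y (f ≫ C.mapV u X) = (M.act.map u).app Y ≫ C.transpose K X Y f := by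
  apply (M.φ K' Y X).injective
  rw [M.φ_natK, φ_transpose, φ_transpose, C.ψ_natK]

lemma transpose_comp_mapS {K : V} {X X' Y : S} (v : X ⟶ X') (f : Y ⟶ C.obj K X) :
    C.transpose K X' Y (f ≫ C.mapS K v) = C.transpose K X Y f ≫ v := by
  apply (M.φ K Y X').injective
  rw [M.φ_natY, φ_transpose, φ_transpose, C.ψ_natX]

lemma hom_ext {K : V} {X A : S} {g₁ g₂ : A ⟶ C.obj K X}
    (h : ∀ {Y : S} (f : Y ⟶ A), C.transpose K X Y (f ≫ g₁) = C.transpose K X Y (f ≫ g₂)) :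
    g₁ = g₂ := by
  simpa using (C.transpose K X A).injective (h (𝟙 A))

noncomputable def lop (X : S) : X ⟶ C.obj (𝟙_ V) X :=
  (C.transpose (𝟙_ V) X X).symm (M.unit X).hom

lemma transpose_comp_lop {X Y : S} (f : Y ⟶ X) :
    C.transpose (𝟙_ V) X Y (f ≫ C.lop X) = (M.unit Y).hom ≫ f := by
  rw [C.transpose_comp, lop, Equiv.apply_symm_apply, M.unit_natural]

lemma φ'_eq_ψ_comp_lop {X Y : S} (f : Y ⟶ X) :
    M.φ' f = C.ψ (𝟙_ V) X Y (f ≫ C.lop X) := by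
  rw [← φ_transpose, transpose_comp_lop, φ']

lemma eq_lop_of_φ'_eq {X : S} (l : X ⟶ C.obj (𝟙_ V) X)
    (h : ∀ (Y : S) (f : Y ⟶ X), M.φ' f = C.ψ (𝟙_ V) X Y (f ≫ l)) : l = C.lop X := by
  simpa using (C.ψ _ X X).injective ((h X (𝟙 X)).symm.trans (C.φ'_eq_ψ_comp_lop (𝟙 X)))

instance isIso_lop (X : S) : IsIso (C.lop X) := by
  refine isIso_of_yoneda_map_bijective _ fun Y => ?_
  have e : (fun f : Y ⟶ X => f ≫ C.lop X)
      = (C.transpose (𝟙_ V) X Y).symm ∘ (M.unit Y).symm.homFromEquiv := by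
    funext f
    simp [Equiv.eq_symm_apply, transpose_comp_lop]
  rw [e]
  exact (Equiv.bijective _).comp (Equiv.bijective _)

lemma lop_naturality {X X' : S} (w : X ⟶ X') : w ≫ C.lop X' = C.lop X ≫ C.mapS (𝟙_ V) w :=
  C.hom_ext fun f => by
    rw [← Category.assoc, transpose_comp_lop, ← Category.assoc f, transpose_comp_mapS,
      transpose_comp_lop, Category.assoc]

variable [BraidedCategory V]

/-- The transpose of the double evaluation `(K⊗L)⊗(K⋔(L⋔X)) ⟶ L⊗(K⊗(K⋔(L⋔X))) ⟶ X`. -/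
noncomputable def aop (K L : V) (X : S) : C.obj K (C.obj L X) ⟶ C.obj (K ⊗ L) X :=
  (C.transpose (K ⊗ L) X _).symm
    ((M.act.map (β_ K L).hom).app _ ≫ (M.assoc L K _).hom
      ≫ C.transpose L X _ (C.transpose K _ _ (𝟙 _)))

lemma transpose_comp_aop {K L : V} {X Y : S} (f : Y ⟶ C.obj K (C.obj L X)) :
    C.transpose (K ⊗ L) X Y (f ≫ C.aop K L X)
      = (M.act.map (β_ K L).hom).app Y ≫ (M.assoc L K Y).hom
          ≫ C.transpose L X _ (C.transpose K _ Y f) := by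
  rw [C.transpose_comp, aop, Equiv.apply_symm_apply,
    reassoc_of% M.braiding_assoc_naturality_obj, ← C.transpose_comp, ← C.transpose_comp,
    Category.comp_id]

lemma transpose_symm_comp_aop {K L : V} {X Y : S}
    (g : (M.act.obj L).obj ((M.act.obj K).obj Y) ⟶ X) :
    (C.transpose K _ Y).symm ((C.transpose L X _).symm g) ≫ C.aop K L X
      = (C.transpose (K ⊗ L) X Y).symm
          ((M.act.map (β_ K L).hom).app Y ≫ (M.assoc L K Y).hom ≫ g) := by
  rw [Equiv.eq_symm_apply, transpose_comp_aop, Equiv.apply_symm_apply, Equiv.apply_symm_apply]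

lemma eq_aop_of_transpose_symm_comp {K L : V} {X : S}
    (a : C.obj K (C.obj L X) ⟶ C.obj (K ⊗ L) X)
    (h : ∀ (Y : S) (g : (M.act.obj L).obj ((M.act.obj K).obj Y) ⟶ X),
      (C.transpose K _ Y).symm ((C.transpose L X _).symm g) ≫ a
        = (C.transpose (K ⊗ L) X Y).symm
            ((M.act.map (β_ K L).hom).app Y ≫ (M.assoc L K Y).hom ≫ g)) :
    a = C.aop K L X := by
  have key := (h _ (C.transpose L X _ (C.transpose K _ _ (𝟙 _)))).trans
    (C.transpose_symm_comp_aop _).symm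
  simpa using key

instance isIso_aop (K L : V) (X : S) : IsIso (C.aop K L X) := by
  refine isIso_of_yoneda_map_bijective _ fun Y => ?_
  let e := (M.act.mapIso (β_ K L)).app Y ≪≫ M.assoc L K Y
  have h : (fun f : Y ⟶ C.obj K (C.obj L X) => f ≫ C.aop K L X)
      = (C.transpose (K ⊗ L) X Y).symm ∘ e.symm.homFromEquiv
          ∘ C.transpose L X _ ∘ C.transpose K _ Y := by
    funext f
    simp [e, Equiv.eq_symm_apply, transpose_comp_aop]
  rw [h]
  exact (Equiv.bijective _).comp <| (Equiv.bijective _).comp <|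
    (Equiv.bijective _).comp (Equiv.bijective _)

lemma mapS_mapS_aop (K L : V) {X X' : S} (w : X ⟶ X') :
    C.mapS K (C.mapS L w) ≫ C.aop K L X' = C.aop K L X ≫ C.mapS (K ⊗ L) w :=
  C.hom_ext fun f => by
    simp only [← Category.assoc, transpose_comp_aop, transpose_comp_mapS]

lemma mapV_mapS_mapV_aop {K K' L L' : V} (u : K ⟶ K') (v : L ⟶ L') (X : S) :
    C.mapV u (C.obj L' X) ≫ C.mapS K (C.mapV v X) ≫ C.aop K L X
      = C.aop K' L' X ≫ C.mapV (u ⊗ₘ v) X :=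
  C.hom_ext fun f => by
    simp only [← Category.assoc, transpose_comp_aop, transpose_comp_mapS, transpose_comp_mapV]
    simp only [Category.assoc, transpose_comp, reassoc_of% M.braiding_assoc_naturality]
    rw [← NatTrans.naturality_assoc]

lemma pentagon_aop (K L N : V) (X : S) :
    C.aop K L (C.obj N X) ≫ C.aop (K ⊗ L) N X
      = C.mapS K (C.aop L N X) ≫ C.aop K (L ⊗ N) X ≫ C.mapV (α_ K L N).hom X :=
  C.hom_ext fun f => by
    simp only [← Category.assoc, transpose_comp_aop, transpose_comp_mapS, transpose_comp_mapV]
    simp only [Category.assoc, transpose_comp]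
    rw [← Functor.map_comp_assoc, reassoc_of% M.braiding_assoc_tensor]

lemma triangle_aop (K : V) (X : S) :
    C.mapV (ρ_ K).hom X = C.mapS K (C.lop X) ≫ C.aop K (𝟙_ V) X :=
  C.hom_ext fun f => by
    simp only [← Category.assoc, transpose_comp_aop, transpose_comp_mapS, transpose_comp_mapV,
      transpose_comp_lop]
    simp only [Category.assoc]
    rw [reassoc_of% M.braiding_assoc_unit]

end TensorClosedVModule.Cotensor

theorem closed_bimodule_exists_unique_general
    [SymmetricCategory V]
    (M : TensorClosedVModule V S)
    (P : V → S → S)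
    (PmapV : ∀ {K L : V}, (K ⟶ L) → ∀ X : S, P L X ⟶ P K X)
    (PmapS : ∀ (K : V) {X X' : S}, (X ⟶ X') → (P K X ⟶ P K X'))
    (ψ : ∀ (K : V) (X Y : S), (Y ⟶ P K X) ≃ (K ⟶ M.hom Y X))
    (ψ_natK : ∀ {K' K : V} {X Y : S} (u : K' ⟶ K) (f : Y ⟶ P K X),
      ψ K' X Y (f ≫ PmapV u X) = u ≫ ψ K X Y f)
    (ψ_natX : ∀ {K : V} {X X' Y : S} (v : X ⟶ X') (f : Y ⟶ P K X),
      ψ K X' Y (f ≫ PmapS K v) = ψ K X Y f ≫ M.mapR Y v)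
    (ψ_natY : ∀ {K : V} {X Y' Y : S} (w : Y' ⟶ Y) (f : Y ⟶ P K X),
      ψ K X Y' (w ≫ f) = ψ K X Y f ≫ M.mapL w X) :
    ∃ (aop : ∀ (K L : V) (X : S), P K (P L X) ⟶ P (K ⊗ L) X)
      (lop : ∀ X : S, X ⟶ P (𝟙_ V) X),
      -- they are isomorphisms
      (∀ K L X, IsIso (aop K L X)) ∧ (∀ X, IsIso (lop X)) ∧
      -- naturality of `a^op`
      (∀ {K K' L L' : V} (u : K ⟶ K') (v : L ⟶ L') (X : S),
        PmapV u (P L' X) ≫ PmapS K (PmapV v X) ≫ aop K L X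
          = aop K' L' X ≫ PmapV (u ⊗ₘ v) X) ∧
      (∀ (K L : V) {X X' : S} (w : X ⟶ X'),
        PmapS K (PmapS L w) ≫ aop K L X' = aop K L X ≫ PmapS (K ⊗ L) w) ∧
      -- naturality of `l^op`
      (∀ {X X' : S} (w : X ⟶ X'), w ≫ lop X' = lop X ≫ PmapS (𝟙_ V) w) ∧
      -- the dual pentagon axiom
      (∀ (K L N : V) (X : S),
        aop K L (P N X) ≫ aop (K ⊗ L) N X
          = PmapS K (aop L N X) ≫ aop K (L ⊗ N) X ≫ PmapV (α_ K L N).hom X) ∧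
      -- the dual triangle axiom
      (∀ (K : V) (X : S),
        PmapV (ρ_ K).hom X = PmapS K (lop X) ≫ aop K (𝟙_ V) X) ∧
      -- `a^op` is determined by the braiding and the adjunctions `φ`, `ψ`
      (∀ (K L : V) (X Y : S) (g : (M.act.obj L).obj ((M.act.obj K).obj Y) ⟶ X),
        (ψ K (P L X) Y).symm
            (M.φ K Y (P L X)
              ((ψ L X ((M.act.obj K).obj Y)).symm
                (M.φ L ((M.act.obj K).obj Y) X g)))
          ≫ aop K L X
        = (ψ (K ⊗ L) X Y).symm
            (M.φ (K ⊗ L) Y X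
              ((M.act.map (β_ K L).hom).app Y ≫ (M.assoc L K Y).hom ≫ g))) ∧
      -- `l^op` is determined by `φ ∘ l_Y^* = ψ ∘ (l^op_X)_*`
      (∀ (X Y : S) (f : Y ⟶ X),
        M.φ (𝟙_ V) Y X ((M.unit Y).hom ≫ f) = ψ (𝟙_ V) X Y (f ≫ lop X)) ∧
      -- uniqueness
      (∀ (aop' : ∀ (K L : V) (X : S), P K (P L X) ⟶ P (K ⊗ L) X)
         (lop' : ∀ X : S, X ⟶ P (𝟙_ V) X),
        ((∀ (K L : V) (X Y : S) (g : (M.act.obj L).obj ((M.act.obj K).obj Y) ⟶ X),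
            (ψ K (P L X) Y).symm
                (M.φ K Y (P L X)
                  ((ψ L X ((M.act.obj K).obj Y)).symm
                    (M.φ L ((M.act.obj K).obj Y) X g)))
              ≫ aop' K L X
            = (ψ (K ⊗ L) X Y).symm
                (M.φ (K ⊗ L) Y X
                  ((M.act.map (β_ K L).hom).app Y ≫ (M.assoc L K Y).hom ≫ g))) ∧
         (∀ (X Y : S) (f : Y ⟶ X),
            M.φ (𝟙_ V) Y X ((M.unit Y).hom ≫ f) = ψ (𝟙_ V) X Y (f ≫ lop' X))) →
        (∀ K L X, aop' K L X = aop K L X) ∧ (∀ X, lop' X = lop X)) := by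
  let C : M.Cotensor := ⟨P, PmapV, PmapS, ψ, ψ_natK, ψ_natX, ψ_natY⟩
  refine ⟨C.aop, C.lop, C.isIso_aop, C.isIso_lop, C.mapV_mapS_mapV_aop, C.mapS_mapS_aop,
    C.lop_naturality, C.pentagon_aop, C.triangle_aop,
    fun _ _ _ _ g => C.transpose_symm_comp_aop g, fun _ _ f => C.φ'_eq_ψ_comp_lop f,
    fun aop' lop' h => ⟨fun K L X => C.eq_aop_of_transpose_symm_comp (aop' K L X) (h.1 K L X),
      fun X => C.eq_lop_of_φ'_eq (lop' X) (h.2 X)⟩⟩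

/-- Let `V` be a closed symmetric monoidal category and `S` a closed `V`-module in
the sense of Hovey: a tensor-closed left `V`-module together with a cotensor
functor `⋔ : V × Sᵒᵖ → Sᵒᵖ` (given by `P`, contravariant `PmapV` in the
`V`-variable and covariant `PmapS` in the `S`-variable) and natural bijections
`ψ_{K,X,Y} : S(Y, K⋔X) ≅ V(K, 𝒮(Y,X))`.  Then there exist unique natural
isomorphisms `a^op_{K,L,X} : K⋔(L⋔X) ⟶ (K⊗L)⋔X` and `l^op_X : X ⟶ I⋔X` making
`Sᵒᵖ` into a tensor-closed `V`-module whose `V`-structure is the opposite of that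
of `S`: `a^op` is determined by the compatibility with the braiding `c` and the
adjunctions `φ`, `ψ`, and `l^op` by `φ ∘ l_Y^* = ψ ∘ (l^op_X)_*`. -/
theorem closed_bimodule_exists_unique
    [SymmetricCategory V]
    (H : V → V ⥤ V) (adj : ∀ Y : V, tensorRight Y ⊣ H Y)
    (M : TensorClosedVModule V S)
    (P : V → S → S)
    (PmapV : ∀ {K L : V}, (K ⟶ L) → ∀ X : S, P L X ⟶ P K X)
    (PmapS : ∀ (K : V) {X X' : S}, (X ⟶ X') → (P K X ⟶ P K X'))
    (PmapV_id : ∀ (K : V) (X : S), PmapV (𝟙 K) X = 𝟙 (P K X))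
    (PmapS_id : ∀ (K : V) (X : S), PmapS K (𝟙 X) = 𝟙 (P K X))
    (PmapV_comp : ∀ {K L N : V} (u : K ⟶ L) (u' : L ⟶ N) (X : S),
      PmapV (u ≫ u') X = PmapV u' X ≫ PmapV u X)
    (PmapS_comp : ∀ (K : V) {X Y Z : S} (v : X ⟶ Y) (v' : Y ⟶ Z),
      PmapS K (v ≫ v') = PmapS K v ≫ PmapS K v')
    (Pmap_comm : ∀ {K L : V} (u : K ⟶ L) {X X' : S} (v : X ⟶ X'),
      PmapV u X ≫ PmapS K v = PmapS L v ≫ PmapV u X')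
    (ψ : ∀ (K : V) (X Y : S), (Y ⟶ P K X) ≃ (K ⟶ M.hom Y X))
    (ψ_natK : ∀ {K' K : V} {X Y : S} (u : K' ⟶ K) (f : Y ⟶ P K X),
      ψ K' X Y (f ≫ PmapV u X) = u ≫ ψ K X Y f)
    (ψ_natX : ∀ {K : V} {X X' Y : S} (v : X ⟶ X') (f : Y ⟶ P K X),
      ψ K X' Y (f ≫ PmapS K v) = ψ K X Y f ≫ M.mapR Y v)
    (ψ_natY : ∀ {K : V} {X Y' Y : S} (w : Y' ⟶ Y) (f : Y ⟶ P K X),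
      ψ K X Y' (w ≫ f) = ψ K X Y f ≫ M.mapL w X) :
    ∃ (aop : ∀ (K L : V) (X : S), P K (P L X) ⟶ P (K ⊗ L) X)
      (lop : ∀ X : S, X ⟶ P (𝟙_ V) X),
      -- they are isomorphisms
      (∀ K L X, IsIso (aop K L X)) ∧ (∀ X, IsIso (lop X)) ∧
      -- naturality of `a^op`
      (∀ {K K' L L' : V} (u : K ⟶ K') (v : L ⟶ L') (X : S),
        PmapV u (P L' X) ≫ PmapS K (PmapV v X) ≫ aop K L X
          = aop K' L' X ≫ PmapV (u ⊗ₘ v) X) ∧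
      (∀ (K L : V) {X X' : S} (w : X ⟶ X'),
        PmapS K (PmapS L w) ≫ aop K L X' = aop K L X ≫ PmapS (K ⊗ L) w) ∧
      -- naturality of `l^op`
      (∀ {X X' : S} (w : X ⟶ X'), w ≫ lop X' = lop X ≫ PmapS (𝟙_ V) w) ∧
      -- the dual pentagon axiom
      (∀ (K L N : V) (X : S),
        aop K L (P N X) ≫ aop (K ⊗ L) N X
          = PmapS K (aop L N X) ≫ aop K (L ⊗ N) X ≫ PmapV (α_ K L N).hom X) ∧
      -- the dual triangle axiom
      (∀ (K : V) (X : S),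
        PmapV (ρ_ K).hom X = PmapS K (lop X) ≫ aop K (𝟙_ V) X) ∧
      -- `a^op` is determined by the braiding and the adjunctions `φ`, `ψ`
      (∀ (K L : V) (X Y : S) (g : (M.act.obj L).obj ((M.act.obj K).obj Y) ⟶ X),
        (ψ K (P L X) Y).symm
            (M.φ K Y (P L X)
              ((ψ L X ((M.act.obj K).obj Y)).symm
                (M.φ L ((M.act.obj K).obj Y) X g)))
          ≫ aop K L X
        = (ψ (K ⊗ L) X Y).symm
            (M.φ (K ⊗ L) Y X
              ((M.act.map (β_ K L).hom).app Y ≫ (M.assoc L K Y).hom ≫ g))) ∧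
      -- `l^op` is determined by `φ ∘ l_Y^* = ψ ∘ (l^op_X)_*`
      (∀ (X Y : S) (f : Y ⟶ X),
        M.φ (𝟙_ V) Y X ((M.unit Y).hom ≫ f) = ψ (𝟙_ V) X Y (f ≫ lop X)) ∧
      -- uniqueness
      (∀ (aop' : ∀ (K L : V) (X : S), P K (P L X) ⟶ P (K ⊗ L) X)
         (lop' : ∀ X : S, X ⟶ P (𝟙_ V) X),
        ((∀ (K L : V) (X Y : S) (g : (M.act.obj L).obj ((M.act.obj K).obj Y) ⟶ X),
            (ψ K (P L X) Y).symm
                (M.φ K Y (P L X)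
                  ((ψ L X ((M.act.obj K).obj Y)).symm
                    (M.φ L ((M.act.obj K).obj Y) X g)))
              ≫ aop' K L X
            = (ψ (K ⊗ L) X Y).symm
                (M.φ (K ⊗ L) Y X
                  ((M.act.map (β_ K L).hom).app Y ≫ (M.assoc L K Y).hom ≫ g))) ∧
         (∀ (X Y : S) (f : Y ⟶ X),
            M.φ (𝟙_ V) Y X ((M.unit Y).hom ≫ f) = ψ (𝟙_ V) X Y (f ≫ lop' X))) →
        (∀ K L X, aop' K L X = aop K L X) ∧ (∀ X, lop' X = lop X)) :=
  closed_bimodule_exists_unique_general M P PmapV PmapS ψ ψ_natK ψ_natX ψ_natY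
end
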